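/- arXiv:dg-ga/9707015 — 4 statements merged into one kernel-verified Lean document; each statement's English description precedes it below -/
import Mathlib

section
/- Matrix lemma (Lemma 2.10). Let A and B be n×n real symmetric matrices with A positive definite, and let c₁, c₂, c₃, c₄ be positive constants such that (1/c₁)·I ≤ A ≤ c₂·I, B ≥ −c₃·I, and trace(AB) ≤ c₄. Then B ≤ c₁((n−1)c₂c₃ + c₄)·I. -/
/-!
Diagonalise `B = U D Uᵀ` with `U` orthogonal. Conjugating by `U` preserves the Loewner order,
the identity and the trace, so we may assume `B = diagonal μ`. The diagonal entries `aᵢ` of `A`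
then lie in `[1/c₁, c₂]`, every eigenvalue satisfies `μᵢ ≥ -c₃`, and `trace(AB) = ∑ aᵢ μᵢ ≤ c₄`.
Each term `aⱼ μⱼ` is at least `-c₂ c₃`, so `aᵢ μᵢ ≤ (n - 1) c₂ c₃ + c₄`, and `μᵢ ≤ c₁ aᵢ μᵢ`
whenever `μᵢ > 0`, while for `μᵢ ≤ 0` the bound is nonnegative.
-/

open Matrix Unitary

theorem le_of_sum_mul_le {ι : Type*} [Fintype ι] {a μ : ι → ℝ} {c₁ c₂ c₃ c₄ : ℝ}
    (hc₁ : 0 < c₁) (hc₃ : 0 ≤ c₃) (hc₄ : 0 ≤ c₄)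
    (ha_lower : ∀ i, 1 / c₁ ≤ a i) (ha_upper : ∀ i, a i ≤ c₂) (hμ : ∀ i, -c₃ ≤ μ i)
    (hsum : ∑ i, a i * μ i ≤ c₄) (i : ι) :
    μ i ≤ c₁ * ((Fintype.card ι - 1) * c₂ * c₃ + c₄) := by
  have ha_pos : ∀ j, 0 < a j := fun j => (one_div_pos.mpr hc₁).trans_le (ha_lower j)
  have hc₂ : 0 ≤ c₂ := (ha_pos i).le.trans (ha_upper i)
  have hterm : ∀ j, 0 ≤ a j * μ j + c₂ * c₃ := by
    intro j
    rcases le_total 0 (μ j) with hμj | hμj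
    · nlinarith [ha_pos j]
    · nlinarith [ha_upper j, hμ j]
  -- all other terms of `∑ⱼ (aⱼ μⱼ + c₂ c₃)` are nonnegative
  have hsingle : a i * μ i + c₂ * c₃ ≤ ∑ j, (a j * μ j + c₂ * c₃) :=
    Finset.single_le_sum (fun j _ => hterm j) (Finset.mem_univ i)
  rw [Finset.sum_add_distrib, Finset.sum_const, Finset.card_univ, nsmul_eq_mul] at hsingle
  have hcard : (1 : ℝ) ≤ Fintype.card ι := by exact_mod_cast Fintype.card_pos_iff.mpr ⟨i⟩
  rcases le_total (μ i) 0 with hμi | hμi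
  · have : 0 ≤ (Fintype.card ι - 1) * c₂ * c₃ + c₄ := by
      have := mul_nonneg (mul_nonneg (sub_nonneg.mpr hcard) hc₂) hc₃
      linarith
    nlinarith
  · calc μ i = c₁ * (1 / c₁ * μ i) := by field_simp
      _ ≤ c₁ * (a i * μ i) := by gcongr; exact ha_lower i
      _ ≤ c₁ * ((Fintype.card ι - 1) * c₂ * c₃ + c₄) := by gcongr; linarith

namespace Matrix

variable {n : Type*} [DecidableEq n]

theorem le_diag_of_posSemidef_sub_smul_one {A : Matrix n n ℝ} {r : ℝ}
    (h : (A - r • 1).PosSemidef) (i : n) : r ≤ A i i := by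
  simpa using h.diag_nonneg (i := i)

theorem diag_le_of_posSemidef_smul_one_sub {A : Matrix n n ℝ} {r : ℝ}
    (h : (r • 1 - A).PosSemidef) (i : n) : A i i ≤ r := by
  simpa using h.diag_nonneg (i := i)

variable [Fintype n]

theorem trace_mul_diagonal {R : Type*} [NonUnitalNonAssocSemiring R] (A : Matrix n n R)
    (d : n → R) : (A * diagonal d).trace = ∑ i, A i i * d i := by
  simp [trace, mul_diagonal]

theorem posSemidef_conjStarAlgAut_iff {R : Type*} [CommRing R] [PartialOrder R] [StarRing R]
    (U : unitary (Matrix n n R)) {M : Matrix n n R} :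
    (conjStarAlgAut R _ U M).PosSemidef ↔ M.PosSemidef := by
  rw [conjStarAlgAut_apply]
  exact isUnit_coe.posSemidef_star_right_conjugate_iff

theorem trace_conjStarAlgAut {R : Type*} [CommRing R] [StarRing R]
    (U : unitary (Matrix n n R)) (M : Matrix n n R) :
    (conjStarAlgAut R _ U M).trace = M.trace := by
  rw [conjStarAlgAut_apply, trace_mul_cycle, coe_star_mul_self, one_mul]

theorem posSemidef_smul_one_sub_diagonal {A : Matrix n n ℝ} {μ : n → ℝ} {c₁ c₂ c₃ c₄ : ℝ}
    (hc₁ : 0 < c₁) (hc₃ : 0 ≤ c₃) (hc₄ : 0 ≤ c₄)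
    (hA_lower : (A - (1 / c₁) • 1).PosSemidef) (hA_upper : (c₂ • 1 - A).PosSemidef)
    (hμ_lower : (diagonal μ + c₃ • 1).PosSemidef) (htrace : (A * diagonal μ).trace ≤ c₄) :
    ((c₁ * ((Fintype.card n - 1) * c₂ * c₃ + c₄)) • 1 - diagonal μ).PosSemidef := by
  rw [smul_one_eq_diagonal, diagonal_sub, posSemidef_diagonal_iff]
  have hμ : ∀ i, -c₃ ≤ μ i := fun i => by
    simpa [neg_le_iff_add_nonneg] using hμ_lower.diag_nonneg (i := i)
  exact fun i => sub_nonneg.mpr <| le_of_sum_mul_le (a := fun j => A j j) hc₁ hc₃ hc₄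
    (le_diag_of_posSemidef_sub_smul_one hA_lower) (diag_le_of_posSemidef_smul_one_sub hA_upper)
    hμ (trace_mul_diagonal A μ ▸ htrace) i

end Matrix

theorem matrix_lemma_general (n : ℕ) (A B : Matrix (Fin n) (Fin n) ℝ)
    (hBsymm : B.IsSymm)
    (c₁ c₂ c₃ c₄ : ℝ) (hc₁ : 0 < c₁) (hc₃ : 0 < c₃) (hc₄ : 0 < c₄)
    (hA_lower : (A - (1 / c₁) • (1 : Matrix (Fin n) (Fin n) ℝ)).PosSemidef)
    (hA_upper : (c₂ • (1 : Matrix (Fin n) (Fin n) ℝ) - A).PosSemidef)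
    (hB_lower : (B + c₃ • (1 : Matrix (Fin n) (Fin n) ℝ)).PosSemidef)
    (htrace : (A * B).trace ≤ c₄) :
    ((c₁ * (((n : ℝ) - 1) * c₂ * c₃ + c₄)) • (1 : Matrix (Fin n) (Fin n) ℝ)
        - B).PosSemidef := by
  have hB : B.IsHermitian := isHermitian_iff_isSymm.mpr hBsymm
  let U := star hB.eigenvectorUnitary
  have hUB : conjStarAlgAut ℝ _ U B = diagonal hB.eigenvalues :=
    hB.conjStarAlgAut_star_eigenvectorUnitary
  rw [← posSemidef_conjStarAlgAut_iff U] at hA_lower hA_upper hB_lower ⊢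
  rw [← trace_conjStarAlgAut U] at htrace
  simp only [map_sub, map_add, map_smul, map_one, map_mul, hUB]
    at hA_lower hA_upper hB_lower htrace ⊢
  simpa using posSemidef_smul_one_sub_diagonal hc₁ hc₃.le hc₄.le hA_lower hA_upper hB_lower htrace

/-- Lemma 2.10 (matrix lemma): if `(1/c₁)·I ≤ A ≤ c₂·I`, `B ≥ -c₃·I` and
`trace(AB) ≤ c₄`, then `B ≤ c₁((n-1)c₂c₃ + c₄)·I`. -/
theorem matrix_lemma (n : ℕ) (A B : Matrix (Fin n) (Fin n) ℝ)
    (hAsymm : A.IsSymm) (hBsymm : B.IsSymm) (hApos : A.PosDef)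
    (c₁ c₂ c₃ c₄ : ℝ) (hc₁ : 0 < c₁) (hc₂ : 0 < c₂) (hc₃ : 0 < c₃) (hc₄ : 0 < c₄)
    (hA_lower : (A - (1 / c₁) • (1 : Matrix (Fin n) (Fin n) ℝ)).PosSemidef)
    (hA_upper : (c₂ • (1 : Matrix (Fin n) (Fin n) ℝ) - A).PosSemidef)
    (hB_lower : (B + c₃ • (1 : Matrix (Fin n) (Fin n) ℝ)).PosSemidef)
    (htrace : (A * B).trace ≤ c₄) :
    ((c₁ * (((n : ℝ) - 1) * c₂ * c₃ + c₄)) • (1 : Matrix (Fin n) (Fin n) ℝ)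
        - B).PosSemidef :=
  matrix_lemma_general n A B hBsymm c₁ c₂ c₃ c₄ hc₁ hc₃ hc₄ hA_lower hA_upper hB_lower htrace
end

section
/- Hessian bounds at the maximum point (Lemma 2.11). Fix n ≥ 2, constants C_E ≥ 1 and C_S > 0, positive numbers r₀, r₁ with r₁ ≤ r₀ and 3r₀ ≤ 1, a point x₁ ∈ ℝⁿ with ‖x₁‖ = 2r₀, α > 0, δ > 0, and set w(x) := ‖x‖^{−α}. Let x_* be a point of the open ball B(x₁, r₁) and let φ₀, φ₁ be C² functions defined on a neighborhood of x_* such that: (a) f := (φ₁ − φ₀) + δ·w has a local maximum at x_*; (b) D²φ₁(x_*) ≥ −C_S·I; (c) there is an n×n symmetric matrix A with (1/C_E)·I ≤ A ≤ C_E·I and trace(A · D²φ₀(x_*)) ≤ 2C_E. Then |D²φ₀|(x_*) + |D²φ₁|(x_*) ≤ 2( C_E²((n−1)(C_S + δαr₀^{−(α+2)}) + 2) + δαr₀^{−(α+2)} ). -/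
/-!
At the local maximum `x_*` of `(φ₁ - φ₀) + δ w` the second-derivative test gives
`D²φ₀ ≥ D²φ₁ + δ D²w`, and the radial function `w = ‖x‖^{-α}` satisfies
`D²w(x) ≥ -α ‖x‖^{-(α+2)} I ≥ -a I` with `a = α r₀^{-(α+2)}`, since `‖x_*‖ ≥ r₀`.
Hence `D²φ₀ ≥ -c I` with `c = C_S + δ a`.

The trace condition bounds `D²φ₀` from above: if `μᵢ` are its eigenvalues and
`qᵢ ∈ [1/C_E, C_E]` the values of the quadratic form of `A` at the unit eigenvectors, then
`∑ μᵢ qᵢ = tr(A D²φ₀) ≤ 2 C_E` and `μⱼ qⱼ ≥ -c C_E` force `μᵢ ≤ C_E (2 C_E + (n - 1) c C_E) = K`.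
Then `-C_S I ≤ D²φ₁ ≤ D²φ₀ - δ D²w ≤ (K + δ a) I`, and the entries of a symmetric matrix
between `-M I` and `M I` are bounded by `M`.
-/

open scoped BigOperators

noncomputable section

abbrev Euc (n : ℕ) := EuclideanSpace ℝ (Fin n)

/-- Second partial derivative `D_{ij}u`. -/
def pd2 (n : ℕ) (i j : Fin n) (u : Euc n → ℝ) (x : Euc n) : ℝ :=
  fderiv ℝ (fun y => fderiv ℝ u y (EuclideanSpace.single j 1)) x (EuclideanSpace.single i 1)

/-- Hessian matrix `D²u`. -/
def hessM (n : ℕ) (u : Euc n → ℝ) (x : Euc n) : Matrix (Fin n) (Fin n) ℝ :=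
  Matrix.of fun i j => pd2 n i j u x

/-- `|D²u|(x) = max_{i,j} |D_{ij}u(x)|`. -/
def hessMax (n : ℕ) (u : Euc n → ℝ) (x : Euc n) : ℝ :=
  ⨆ i : Fin n, ⨆ j : Fin n, |pd2 n i j u x|

open Filter Topology Matrix
open scoped RealInnerProductSpace

section SecondDerivativeTest

variable {E : Type*} [NormedAddCommGroup E] [NormedSpace ℝ E]

theorem IsLocalMax.deriv_deriv_nonpos {g : ℝ → ℝ} {a : ℝ} (h : IsLocalMax g a)
    (hc : ContinuousAt g a) : deriv (deriv g) a ≤ 0 := by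
  by_contra! hpos
  -- The second-derivative test makes `a` a local minimum too, so `g` is locally constant.
  have hmin : IsLocalMin g a := isLocalMin_of_deriv_deriv_pos hpos h.deriv_eq_zero hc
  have hconst : g =ᶠ[𝓝 a] fun _ => g a := by
    filter_upwards [h, hmin] with t hmax hmin using le_antisymm hmax hmin
  have hderiv : deriv g =ᶠ[𝓝 a] fun _ => 0 := by
    filter_upwards [hconst.eventuallyEq_nhds] with t ht
    rw [ht.deriv_eq, deriv_const]
  rw [hderiv.deriv_eq, deriv_const] at hpos
  exact lt_irrefl 0 hpos

theorem ContDiffAt.differentiableAt_fderiv {F : Type*} [NormedAddCommGroup F] [NormedSpace ℝ F]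
    {u : E → F} {x : E} (hu : ContDiffAt ℝ 2 u x) : DifferentiableAt ℝ (fderiv ℝ u) x :=
  (hu.fderiv_right (m := 1) le_rfl).differentiableAt one_ne_zero

theorem ContDiffAt.deriv_deriv_comp_add_smul {F : Type*} [NormedAddCommGroup F]
    [NormedSpace ℝ F] {u : E → F} {x : E} (hu : ContDiffAt ℝ 2 u x) (v : E) :
    deriv (deriv fun t : ℝ => u (x + t • v)) 0 = fderiv ℝ (fderiv ℝ u) x v v := by
  have hline : ∀ t : ℝ, HasDerivAt (fun t : ℝ => x + t • v) v t := fun t => by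
    simpa using ((hasDerivAt_id t).smul_const v).const_add x
  have hline0 : Tendsto (fun t : ℝ => x + t • v) (𝓝 0) (𝓝 x) := by
    simpa using (hline 0).continuousAt.tendsto
  have hderiv : deriv (fun t : ℝ => u (x + t • v)) =ᶠ[𝓝 0]
      fun t => fderiv ℝ u (x + t • v) v := by
    filter_upwards [hline0.eventually (hu.eventually (by simp))] with t ht
    exact ((ht.differentiableAt (by simp)).hasFDerivAt.comp_hasDerivAt t (hline t)).deriv
  have hsecond : HasFDerivAt (fderiv ℝ u) (fderiv ℝ (fderiv ℝ u) x) (x + (0 : ℝ) • v) := by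
    simpa using hu.differentiableAt_fderiv.hasFDerivAt
  rw [hderiv.deriv_eq]
  exact ((ContinuousLinearMap.apply ℝ F v).hasFDerivAt.comp_hasDerivAt 0
    (hsecond.comp_hasDerivAt 0 (hline 0))).deriv

theorem IsLocalMax.fderiv_fderiv_apply_self_nonpos {u : E → ℝ} {x : E} (h : IsLocalMax u x)
    (hu : ContDiffAt ℝ 2 u x) (v : E) : fderiv ℝ (fderiv ℝ u) x v v ≤ 0 := by
  have hline : ContinuousAt (fun t : ℝ => x + t • v) 0 := by fun_prop
  rw [← hu.deriv_deriv_comp_add_smul]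
  rw [← add_zero x, ← zero_smul ℝ v] at h hu
  exact (h.comp_continuous (g := fun t : ℝ => x + t • v) hline).deriv_deriv_nonpos
    (hu.continuousAt.comp (g := u) (f := fun t : ℝ => x + t • v) hline)

end SecondDerivativeTest

section NormRpow

variable {E : Type*} [NormedAddCommGroup E] [InnerProductSpace ℝ E]

theorem contDiffAt_norm_rpow (α : ℝ) {x : E} (hx : x ≠ 0) :
    ContDiffAt ℝ 2 (fun y : E => ‖y‖ ^ α) x :=
  (contDiffAt_norm ℝ hx).rpow_const_of_ne (norm_ne_zero_iff.2 hx)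

theorem deriv_deriv_norm_add_smul_rpow (α : ℝ) {x : E} (hx : x ≠ 0) (v : E) :
    deriv (deriv fun t : ℝ => ‖x + t • v‖ ^ (-α)) 0 =
      α * (α + 2) * ⟪x, v⟫ ^ 2 * ‖x‖ ^ (-(α + 4)) - α * ‖x‖ ^ (-(α + 2)) * ‖v‖ ^ 2 := by
  have hsq : ∀ (y : E) (s : ℝ), (‖y‖ ^ 2) ^ s = ‖y‖ ^ (2 * s) := fun y s => by
    exact_mod_cast (Real.rpow_natCast_mul (norm_nonneg y) 2 s).symm
  set p := -α / 2 with hp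
  set q : ℝ → ℝ := fun t => ‖x + t • v‖ ^ 2
  have hline : ∀ t : ℝ, HasDerivAt (fun t : ℝ => x + t • v) v t := fun t => by
    simpa using ((hasDerivAt_id t).smul_const v).const_add x
  have hq : ∀ t, HasDerivAt q (2 * ⟪x + t • v, v⟫) t := fun t => (hline t).norm_sq
  have hq' : HasDerivAt (fun t : ℝ => 2 * ⟪x + t • v, v⟫) (2 * ⟪v, v⟫) 0 := by
    simpa using ((hline 0).inner ℝ (hasDerivAt_const 0 v)).const_mul 2
  have hq0 : q 0 = ‖x‖ ^ 2 := by simp [q]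
  have hqne : ∀ᶠ t in 𝓝 (0 : ℝ), q t ≠ 0 := by
    have : 0 < q 0 := by rw [hq0]; positivity
    exact ((hq 0).continuousAt.eventually (eventually_gt_nhds this)).mono fun t ht => ht.ne'
  have hrpow : (fun t : ℝ => ‖x + t • v‖ ^ (-α)) = fun t => q t ^ p := by
    funext t
    rw [hsq, hp, mul_div_cancel₀ _ two_ne_zero]
  have hderiv : deriv (fun t => q t ^ p) =ᶠ[𝓝 0]
      fun t => 2 * ⟪x + t • v, v⟫ * p * q t ^ (p - 1) := by
    filter_upwards [hqne] with t ht using ((hq t).rpow_const (.inl ht)).deriv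
  have hsecond := (hq'.mul_const p).fun_mul
    ((hq 0).rpow_const (p := p - 1) (.inl hqne.self_of_nhds))
  rw [hrpow, hderiv.deriv_eq, hsecond.deriv]
  simp only [zero_smul, add_zero, hq0, real_inner_self_eq_norm_sq, hsq]
  rw [show 2 * (p - 1) = -(α + 2) by rw [hp]; ring,
    show 2 * (p - 1 - 1) = -(α + 4) by rw [hp]; ring, hp]
  ring

theorem fderiv_fderiv_norm_rpow_apply_self_ge {α : ℝ} (hα : 0 ≤ α) {x : E} (hx : x ≠ 0)
    (v : E) :
    -(α * ‖x‖ ^ (-(α + 2)) * ‖v‖ ^ 2) ≤ fderiv ℝ (fderiv ℝ fun y : E => ‖y‖ ^ (-α)) x v v := by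
  rw [← (contDiffAt_norm_rpow _ hx).deriv_deriv_comp_add_smul,
    deriv_deriv_norm_add_smul_rpow α hx]
  have : 0 ≤ α * (α + 2) * ⟪x, v⟫ ^ 2 * ‖x‖ ^ (-(α + 4)) := by positivity
  linarith

end NormRpow

section SymmetricMatrices

variable {ι : Type*} [Fintype ι] [DecidableEq ι]

omit [DecidableEq ι] in
theorem OrthonormalBasis.dotProduct_self (b : OrthonormalBasis ι ℝ (EuclideanSpace ℝ ι))
    (i : ι) : ⇑(b i) ⬝ᵥ ⇑(b i) = 1 := by
  have := b.inner_eq_one i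
  rwa [EuclideanSpace.inner_eq_star_dotProduct, star_trivial] at this

theorem Matrix.trace_eq_sum_dotProduct_mulVec (M : Matrix ι ι ℝ)
    (b : OrthonormalBasis ι ℝ (EuclideanSpace ℝ ι)) :
    M.trace = ∑ i, ⇑(b i) ⬝ᵥ M *ᵥ ⇑(b i) := by
  have h : LinearMap.toMatrix (EuclideanSpace.basisFun ι ℝ).toBasis
      (EuclideanSpace.basisFun ι ℝ).toBasis (toLpLin 2 2 M) = M := by
    ext i j; simp [LinearMap.toMatrix_apply, toLpLin_apply]
  conv_lhs => rw [← h, ← LinearMap.trace_eq_matrix_trace, LinearMap.trace_eq_sum_inner _ b]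
  simp [EuclideanSpace.inner_eq_star_dotProduct, toLpLin_apply, dotProduct_comm]

theorem Matrix.IsHermitian.trace_mul_eq_sum_eigenvalues_mul {S : Matrix ι ι ℝ} (hS : S.IsHermitian)
    (A : Matrix ι ι ℝ) :
    (A * S).trace = ∑ i, hS.eigenvalues i *
      (⇑(hS.eigenvectorBasis i) ⬝ᵥ A *ᵥ ⇑(hS.eigenvectorBasis i)) := by
  simp [trace_eq_sum_dotProduct_mulVec _ hS.eigenvectorBasis, ← mulVec_mulVec,
    mulVec_eigenvectorBasis, mulVec_smul, dotProduct_smul]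

theorem Matrix.IsHermitian.posSemidef_add_smul_one_iff {S : Matrix ι ι ℝ} (hS : S.IsHermitian)
    (c : ℝ) : (S + c • 1).PosSemidef ↔ ∀ i, -c ≤ hS.eigenvalues i := by
  have hherm : (S + algebraMap ℝ (Matrix ι ι ℝ) c).IsHermitian := by
    rw [Algebra.algebraMap_eq_smul_one]; exact hS.add (isHermitian_one.smul (.all c))
  rw [posSemidef_iff_isHermitian_and_spectrum_nonneg, ← Algebra.algebraMap_eq_smul_one,
    ← spectrum.add_singleton_eq, hS.spectrum_real_eq_range_eigenvalues, and_iff_right hherm,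
    Set.add_singleton, ← Set.range_comp, Set.range_subset_iff]
  simp [neg_le_iff_add_nonneg]

theorem Matrix.IsHermitian.posSemidef_smul_one_sub_iff {S : Matrix ι ι ℝ} (hS : S.IsHermitian)
    (K : ℝ) : (K • 1 - S).PosSemidef ↔ ∀ i, hS.eigenvalues i ≤ K := by
  have hherm : (algebraMap ℝ (Matrix ι ι ℝ) K - S).IsHermitian := by
    rw [Algebra.algebraMap_eq_smul_one]; exact (isHermitian_one.smul (.all K)).sub hS
  rw [posSemidef_iff_isHermitian_and_spectrum_nonneg, ← Algebra.algebraMap_eq_smul_one,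
    ← spectrum.singleton_sub_eq, hS.spectrum_real_eq_range_eigenvalues, and_iff_right hherm,
    Set.singleton_sub, ← Set.range_comp, Set.range_subset_iff]
  simp

theorem Matrix.IsHermitian.posSemidef_smul_one_sub_of_trace_mul_le {S A : Matrix ι ι ℝ}
    (hS : S.IsHermitian) {c C T : ℝ} (hc : 0 ≤ c) (hC : 0 < C) (hT : 0 ≤ T)
    (hS_ge : (S + c • 1).PosSemidef) (hA_ge : (A - (1 / C) • 1).PosSemidef)
    (hA_le : (C • 1 - A).PosSemidef) (htr : (A * S).trace ≤ T) :
    ((C * (T + (Fintype.card ι - 1) * (c * C))) • 1 - S).PosSemidef := by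
  refine (hS.posSemidef_smul_one_sub_iff _).2 fun i => ?_
  set μ := hS.eigenvalues
  have hμ_ge := (hS.posSemidef_add_smul_one_iff c).1 hS_ge
  set q : ι → ℝ := fun j => ⇑(hS.eigenvectorBasis j) ⬝ᵥ A *ᵥ ⇑(hS.eigenvectorBasis j)
  have hq : ∀ j, 1 / C ≤ q j ∧ q j ≤ C := fun j => by
    have h₁ := hA_ge.dotProduct_mulVec_nonneg (hS.eigenvectorBasis j)
    have h₂ := hA_le.dotProduct_mulVec_nonneg (hS.eigenvectorBasis j)
    simp only [sub_mulVec, smul_mulVec, one_mulVec, dotProduct_sub, dotProduct_smul, star_trivial,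
      hS.eigenvectorBasis.dotProduct_self, smul_eq_mul, mul_one, sub_nonneg] at h₁ h₂
    exact ⟨h₁, h₂⟩
  have hterm : ∀ j, 0 ≤ μ j * q j + c * C := fun j => by
    have hqj := hq j
    have : 0 ≤ 1 / C := by positivity
    nlinarith [hμ_ge j]
  -- Every term of `∑ (μ j q j + c C) = tr (A S) + card ι * c C` is nonnegative.
  have hμq : μ i * q i ≤ T + (Fintype.card ι - 1) * (c * C) := by
    have hsum := Finset.single_le_sum (fun j _ => hterm j) (Finset.mem_univ i)
    rw [Finset.sum_add_distrib, ← hS.trace_mul_eq_sum_eigenvalues_mul, Finset.sum_const,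
      Finset.card_univ, nsmul_eq_mul] at hsum
    linarith
  rcases le_or_gt (μ i) 0 with hμ | hμ
  · have : 0 ≤ (Fintype.card ι - 1 : ℝ) := by
      have : 1 ≤ Fintype.card ι := Fintype.card_pos_iff.2 ⟨i⟩
      simp only [sub_nonneg]; exact_mod_cast this
    have : 0 ≤ C * (T + (Fintype.card ι - 1) * (c * C)) := by positivity
    linarith
  · have hCq : 1 ≤ C * q i := by
      have := (hq i).1
      rwa [div_le_iff₀' hC] at this
    calc μ i ≤ C * (μ i * q i) := by nlinarith
      _ ≤ _ := by gcongr

omit [Fintype ι] in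
theorem Matrix.PosSemidef.add_smul_one_of_le {S : Matrix ι ι ℝ} {a b : ℝ}
    (h : (S + a • 1).PosSemidef) (hab : a ≤ b) : (S + b • 1).PosSemidef := by
  have := h.add (PosSemidef.one.smul (sub_nonneg.2 hab))
  rwa [add_assoc, ← add_smul, add_sub_cancel] at this

theorem Matrix.PosSemidef.two_mul_abs_apply_le {P : Matrix ι ι ℝ} (hP : P.PosSemidef)
    (i j : ι) : 2 * |P i j| ≤ P i i + P j j := by
  have hsymm : P j i = P i j := hP.isHermitian.apply i j
  have hplus := hP.dotProduct_mulVec_nonneg (Pi.single i 1 + Pi.single j 1)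
  have hminus := hP.dotProduct_mulVec_nonneg (Pi.single i 1 - Pi.single j 1)
  simp only [star_trivial, mulVec_add, mulVec_sub, mulVec_single, MulOpposite.op_one, one_smul,
    dotProduct_add, dotProduct_sub, add_dotProduct, sub_dotProduct, single_dotProduct, col_apply,
    one_mul, hsymm, sub_nonneg, tsub_le_iff_right] at hplus hminus
  rw [← abs_two, ← abs_mul, abs_le]
  constructor <;> linarith

theorem Matrix.abs_apply_le_of_posSemidef {S : Matrix ι ι ℝ} {M : ℝ}
    (hlow : (S + M • 1).PosSemidef) (hup : (M • 1 - S).PosSemidef) (i j : ι) :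
    |S i j| ≤ M := by
  have h₁ := hlow.two_mul_abs_apply_le i j
  have h₂ := hup.two_mul_abs_apply_le i j
  simp only [add_apply, sub_apply, smul_apply, one_apply_eq, smul_eq_mul, mul_one] at h₁ h₂
  set m := M * (1 : Matrix ι ι ℝ) i j
  have h₃ : 2 * |S i j| ≤ |S i j + m| + |m - S i j| := by
    calc 2 * |S i j| = |(S i j + m) - (m - S i j)| := by rw [← abs_two, ← abs_mul]; ring_nf
      _ ≤ _ := abs_sub _ _
  linarith

end SymmetricMatrices

section Hessian

variable {n : ℕ} {u v : Euc n → ℝ} {x : Euc n}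

theorem pd2_eq_fderiv_fderiv (hu : DifferentiableAt ℝ (fderiv ℝ u) x) (i j : Fin n) :
    pd2 n i j u x =
      fderiv ℝ (fderiv ℝ u) x (EuclideanSpace.single i 1) (EuclideanSpace.single j 1) := by
  rw [pd2, fderiv_clm_apply hu (differentiableAt_const _)]
  simp

theorem hessM_eq_iteratedFDeriv (hu : ContDiffAt ℝ 2 u x) :
    hessM n u x = Matrix.of fun i j =>
      iteratedFDeriv ℝ 2 u x ![EuclideanSpace.single i 1, EuclideanSpace.single j 1] := by
  ext i j
  simp [hessM, pd2_eq_fderiv_fderiv hu.differentiableAt_fderiv, iteratedFDeriv_two_apply]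

theorem hessM_add (hu : ContDiffAt ℝ 2 u x) (hv : ContDiffAt ℝ 2 v x) :
    hessM n (fun y => u y + v y) x = hessM n u x + hessM n v x := by
  rw [hessM_eq_iteratedFDeriv (hu.add hv), hessM_eq_iteratedFDeriv hu,
    hessM_eq_iteratedFDeriv hv, fun_iteratedFDeriv_add_apply hu hv]
  rfl

theorem hessM_sub (hu : ContDiffAt ℝ 2 u x) (hv : ContDiffAt ℝ 2 v x) :
    hessM n (fun y => u y - v y) x = hessM n u x - hessM n v x := by
  rw [hessM_eq_iteratedFDeriv (hu.sub hv), hessM_eq_iteratedFDeriv hu,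
    hessM_eq_iteratedFDeriv hv, fun_iteratedFDeriv_sub_apply hu hv]
  rfl

theorem hessM_const_mul (c : ℝ) (hu : ContDiffAt ℝ 2 u x) :
    hessM n (fun y => c * u y) x = c • hessM n u x := by
  change hessM n (fun y => c • u y) x = _
  rw [hessM_eq_iteratedFDeriv (hu.const_smul c), hessM_eq_iteratedFDeriv hu,
    iteratedFDeriv_const_smul_apply' hu]
  rfl

theorem dotProduct_hessM_mulVec (hu : DifferentiableAt ℝ (fderiv ℝ u) x) (v : Fin n → ℝ) :
    v ⬝ᵥ hessM n u x *ᵥ v = fderiv ℝ (fderiv ℝ u) x (WithLp.toLp 2 v) (WithLp.toLp 2 v) := by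
  have hv : WithLp.toLp 2 v = ∑ i, v i • EuclideanSpace.single i (1 : ℝ) := by
    ext k; simp [Pi.single_apply]
  simp only [dotProduct, mulVec, hessM, pd2_eq_fderiv_fderiv hu, of_apply, Finset.mul_sum, hv,
    map_sum, map_smul, _root_.sum_apply, _root_.smul_apply, smul_eq_mul]
  rw [Finset.sum_comm]
  exact Finset.sum_congr rfl fun i _ => Finset.sum_congr rfl fun j _ => by ring

theorem hessM_isHermitian (hu : ContDiffAt ℝ 2 u x) : (hessM n u x).IsHermitian := by
  ext i j
  simp only [hessM, pd2_eq_fderiv_fderiv hu.differentiableAt_fderiv, conjTranspose_apply, of_apply,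
    star_trivial]
  exact hu.isSymmSndFDerivAt (by simp) _ _

theorem IsLocalMax.posSemidef_neg_hessM (h : IsLocalMax u x) (hu : ContDiffAt ℝ 2 u x) :
    (-hessM n u x).PosSemidef :=
  .of_dotProduct_mulVec_nonneg (hessM_isHermitian hu).neg fun v => by
    simpa [neg_mulVec, dotProduct_hessM_mulVec hu.differentiableAt_fderiv] using
      h.fderiv_fderiv_apply_self_nonpos hu (WithLp.toLp 2 v)

theorem IsLocalMax.posSemidef_hessM_sub_sub_smul {u₀ u₁ w : Euc n → ℝ} {c : ℝ}
    (h : IsLocalMax (fun y => (u₁ y - u₀ y) + c * w y) x) (hu₀ : ContDiffAt ℝ 2 u₀ x)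
    (hu₁ : ContDiffAt ℝ 2 u₁ x) (hw : ContDiffAt ℝ 2 w x) :
    (hessM n u₀ x - hessM n u₁ x - c • hessM n w x).PosSemidef := by
  have := h.posSemidef_neg_hessM ((hu₁.sub hu₀).add (contDiffAt_const.mul hw))
  rw [hessM_add (hu₁.sub hu₀) (contDiffAt_const.mul hw), hessM_sub hu₁ hu₀,
    hessM_const_mul c hw] at this
  convert this using 1
  abel

theorem posSemidef_hessM_norm_rpow_add {α r : ℝ} (hα : 0 ≤ α) (hr : 0 < r) (hrx : r ≤ ‖x‖) :
    (hessM n (fun y => ‖y‖ ^ (-α)) x + (α * r ^ (-(α + 2))) • 1).PosSemidef := by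
  have hx : x ≠ 0 := norm_pos_iff.1 (hr.trans_le hrx)
  have hsmooth := contDiffAt_norm_rpow (-α) hx
  have hsharp : (hessM n (fun y => ‖y‖ ^ (-α)) x + (α * ‖x‖ ^ (-(α + 2))) • 1).PosSemidef := by
    refine .of_dotProduct_mulVec_nonneg ((hessM_isHermitian hsmooth).add
      (isHermitian_one.smul (.all _))) fun v => ?_
    have := fderiv_fderiv_norm_rpow_apply_self_ge hα hx (WithLp.toLp 2 v)
    rw [← dotProduct_hessM_mulVec hsmooth.differentiableAt_fderiv, ← real_inner_self_eq_norm_sq,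
      EuclideanSpace.inner_toLp_toLp, star_trivial] at this
    simp only [star_trivial, add_mulVec, smul_mulVec, one_mulVec, dotProduct_add,
      dotProduct_smul, smul_eq_mul]
    linarith
  exact hsharp.add_smul_one_of_le <|
    mul_le_mul_of_nonneg_left (Real.rpow_le_rpow_of_nonpos hr hrx (by linarith)) hα

theorem hessMax_le_of_posSemidef [NeZero n] {M : ℝ} (hlow : (hessM n u x + M • 1).PosSemidef)
    (hup : (M • 1 - hessM n u x).PosSemidef) : hessMax n u x ≤ M :=
  ciSup_le fun i => ciSup_le fun j => abs_apply_le_of_posSemidef hlow hup i j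

end Hessian

theorem hessian_bounds_at_max_general
    (n : ℕ) (hn : 2 ≤ n) (CE CS : ℝ) (hCE : 1 ≤ CE) (hCS : 0 < CS)
    (r₀ r₁ : ℝ) (hr₀ : 0 < r₀) (hr₁r₀ : r₁ ≤ r₀)
    (x₁ : Euc n) (hx₁ : ‖x₁‖ = 2 * r₀)
    (α δ : ℝ) (hα : 0 < α) (hδ : 0 < δ)
    (w : Euc n → ℝ) (hw : ∀ x, w x = ‖x‖ ^ (-α))
    (xst : Euc n) (hxst : xst ∈ Metric.ball x₁ r₁)
    (φ₀ φ₁ : Euc n → ℝ) (hφ₀ : ContDiffAt ℝ 2 φ₀ xst) (hφ₁ : ContDiffAt ℝ 2 φ₁ xst)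
    (hmax : IsLocalMax (fun x => (φ₁ x - φ₀ x) + δ * w x) xst)
    (hhess₁ : (hessM n φ₁ xst + CS • (1 : Matrix (Fin n) (Fin n) ℝ)).PosSemidef)
    (hA : ∃ A : Matrix (Fin n) (Fin n) ℝ, A.IsSymm ∧
      (A - (1 / CE) • (1 : Matrix (Fin n) (Fin n) ℝ)).PosSemidef ∧
      (CE • (1 : Matrix (Fin n) (Fin n) ℝ) - A).PosSemidef ∧
      (A * hessM n φ₀ xst).trace ≤ 2 * CE) :
    hessMax n φ₀ xst + hessMax n φ₁ xst ≤
      2 * (CE ^ 2 * (((n : ℝ) - 1) * (CS + δ * α * r₀ ^ (-(α + 2))) + 2)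
        + δ * α * r₀ ^ (-(α + 2))) := by
  have : NeZero n := ⟨by omega⟩
  obtain rfl : w = fun x => ‖x‖ ^ (-α) := funext hw
  obtain ⟨A, -, hA_ge, hA_le, htr⟩ := hA
  have hr₀x : r₀ ≤ ‖xst‖ := by
    rw [Metric.mem_ball, dist_comm, dist_eq_norm] at hxst
    linarith [norm_sub_norm_le x₁ xst]
  set a := α * r₀ ^ (-(α + 2))
  set K := CE ^ 2 * (((n : ℝ) - 1) * (CS + δ * a) + 2) with hK
  have hδa : 0 ≤ δ * a := by positivity
  have hHw := posSemidef_hessM_norm_rpow_add (n := n) hα.le hr₀ hr₀x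
  have hcomp := hmax.posSemidef_hessM_sub_sub_smul hφ₀ hφ₁
    (contDiffAt_norm_rpow _ (norm_pos_iff.1 (hr₀.trans_le hr₀x)))
  have hH₀_ge : (hessM n φ₀ xst + (CS + δ * a) • 1).PosSemidef := by
    convert (hhess₁.add (hHw.smul hδ.le)).add hcomp using 1
    module
  have hH₀_le : (K • 1 - hessM n φ₀ xst).PosSemidef := by
    convert (hessM_isHermitian hφ₀).posSemidef_smul_one_sub_of_trace_mul_le (by positivity)
      (by positivity) (by positivity) hH₀_ge hA_ge hA_le htr using 3
    rw [Fintype.card_fin, hK]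
    ring
  have hH₁_le : ((K + δ * a) • 1 - hessM n φ₁ xst).PosSemidef := by
    convert (hH₀_le.add (hHw.smul hδ.le)).add hcomp using 1
    module
  have hcK : CS + δ * a ≤ K := by
    have hn2 : (2 : ℝ) ≤ n := by exact_mod_cast hn
    rw [hK]
    nlinarith [mul_le_mul_of_nonneg_right (one_le_pow₀ (n := 2) hCE)
      (by nlinarith : 0 ≤ ((n : ℝ) - 1) * (CS + δ * a) + 2)]
  have h₀ := hessMax_le_of_posSemidef (hH₀_ge.add_smul_one_of_le hcK) hH₀_le
  have h₁ := hessMax_le_of_posSemidef (hhess₁.add_smul_one_of_le (by linarith)) hH₁_le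
  linarith

/-- Lemma 2.11: Hessian bounds at the maximum point of `(φ₁ - φ₀) + δw`. -/
theorem hessian_bounds_at_max
    (n : ℕ) (hn : 2 ≤ n) (CE CS : ℝ) (hCE : 1 ≤ CE) (hCS : 0 < CS)
    (r₀ r₁ : ℝ) (hr₀ : 0 < r₀) (hr₁ : 0 < r₁) (hr₁r₀ : r₁ ≤ r₀) (h3r₀ : 3 * r₀ ≤ 1)
    (x₁ : Euc n) (hx₁ : ‖x₁‖ = 2 * r₀)
    (α δ : ℝ) (hα : 0 < α) (hδ : 0 < δ)
    (w : Euc n → ℝ) (hw : ∀ x, w x = ‖x‖ ^ (-α))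
    (xst : Euc n) (hxst : xst ∈ Metric.ball x₁ r₁)
    (φ₀ φ₁ : Euc n → ℝ) (hφ₀ : ContDiffAt ℝ 2 φ₀ xst) (hφ₁ : ContDiffAt ℝ 2 φ₁ xst)
    (hmax : IsLocalMax (fun x => (φ₁ x - φ₀ x) + δ * w x) xst)
    (hhess₁ : (hessM n φ₁ xst + CS • (1 : Matrix (Fin n) (Fin n) ℝ)).PosSemidef)
    (hA : ∃ A : Matrix (Fin n) (Fin n) ℝ, A.IsSymm ∧
      (A - (1 / CE) • (1 : Matrix (Fin n) (Fin n) ℝ)).PosSemidef ∧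
      (CE • (1 : Matrix (Fin n) (Fin n) ℝ) - A).PosSemidef ∧
      (A * hessM n φ₀ xst).trace ≤ 2 * CE) :
    hessMax n φ₀ xst + hessMax n φ₁ xst ≤
      2 * (CE ^ 2 * (((n : ℝ) - 1) * (CS + δ * α * r₀ ^ (-(α + 2))) + 2)
        + δ * α * r₀ ^ (-(α + 2))) :=
  hessian_bounds_at_max_general n hn CE CS hCE hCS r₀ r₁ hr₀ hr₁r₀ x₁ hx₁ α δ hα hδ w hw xst hxst φ₀
    φ₁ hφ₀ hφ₁ hmax hhess₁ hA
end
end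

section
/- One-dimensional global support bound (claim in the proof of Lemma 2.16). Let Ω ⊆ ℝ be an open interval, let v : Ω → ℝ be continuous, and let C ∈ ℝ. Assume that for every x ∈ Ω there is a C² lower support function for v at x whose second derivative is ≥ −C on a neighborhood of x. Fix x₀ ∈ Ω, let φ be a C² lower support function for v at x₀ with φ'' ≥ −C near x₀, and set a := φ'(x₀). Then for all x ∈ Ω, v(x) ≥ v(x₀) + a(x − x₀) − (C/2)(x − x₀)². -/
/-!
Adding `C / 2 * (y - x₀) ^ 2` to `v` turns every `C²` lower support function `ψ` with
`ψ'' ≥ -C` into a local affine minorant, because `ψ + C / 2 * (· - x) ^ 2` is convex near the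
contact point and so lies above its tangent line. A continuous function on an interval with a
local affine minorant at every point is convex (a maximum principle, after a small strictly
convex perturbation), and for a convex function the local affine minorant at `x₀` coming from
`φ` is a global one; written back in terms of `v`, this is the bound.
-/

open Set Filter Topology

lemma convexOn_add_sq_of_deriv2_ge {U : Set ℝ} {ψ ψ' ψ'' : ℝ → ℝ} {C : ℝ} (hU : IsOpen U)
    (hUc : Convex ℝ U) (hψ : ∀ y ∈ U, HasDerivAt ψ (ψ' y) y)
    (hψ' : ∀ y ∈ U, HasDerivAt ψ' (ψ'' y) y) (hψ'' : ∀ y ∈ U, -C ≤ ψ'' y) (x₀ : ℝ) :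
    ConvexOn ℝ U fun y => ψ y + C / 2 * (y - x₀) ^ 2 := by
  have hsq (y : ℝ) : HasDerivAt (fun y => C / 2 * (y - x₀) ^ 2) (C * (y - x₀)) y :=
    ((((hasDerivAt_id y).sub_const x₀).pow 2).const_mul (C / 2)).congr_deriv (by simp; ring)
  have hlin (y : ℝ) : HasDerivAt (fun y => C * (y - x₀)) C y := by
    simpa using ((hasDerivAt_id y).sub_const x₀).const_mul C
  refine convexOn_of_hasDerivWithinAt2_nonneg hUc (f' := fun y => ψ' y + C * (y - x₀))
    (f'' := fun y => ψ'' y + C) (fun y hy => ((hψ y hy).add (hsq y)).continuousAt.continuousWithinAt)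
    (fun y hy => ?_) (fun y hy => ?_) (fun y hy => ?_) <;> simp only [hU.interior_eq] at hy ⊢
  · exact ((hψ y hy).add (hsq y)).hasDerivWithinAt
  · exact ((hψ' y hy).add (hlin y)).hasDerivWithinAt
  · linarith [hψ'' y hy]

lemma ConvexOn.add_mul_sub_le_of_hasDerivAt {S : Set ℝ} {f : ℝ → ℝ} {f' x y : ℝ}
    (hf : ConvexOn ℝ S f) (hx : x ∈ S) (hy : y ∈ S) (hf' : HasDerivAt f f' x) :
    f x + f' * (y - x) ≤ f y := by
  rcases lt_trichotomy x y with hxy | rfl | hyx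
  · have h := hf.le_slope_of_hasDerivAt hx hy hxy hf'
    rw [slope_def_field, le_div_iff₀ (sub_pos.2 hxy)] at h
    linarith
  · simp
  · have h := hf.slope_le_of_hasDerivAt hy hx hyx hf'
    rw [slope_def_field, div_le_iff₀ (sub_pos.2 hyx)] at h
    linarith

lemma eventually_sub_sq_le_of_deriv2_ge {N : Set ℝ} {ψ : ℝ → ℝ} {x C : ℝ} (hN : IsOpen N)
    (hx : x ∈ N) (hψ : ContDiffOn ℝ 2 ψ N) (hψ'' : ∀ y ∈ N, -C ≤ deriv (deriv ψ) y) :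
    ∀ᶠ y in 𝓝 x, ψ x + deriv ψ x * (y - x) - C / 2 * (y - x) ^ 2 ≤ ψ y := by
  obtain ⟨δ, hδ, hball⟩ := Metric.isOpen_iff.1 hN x hx
  have hd (y : ℝ) (hy : y ∈ N) : HasDerivAt ψ (deriv ψ y) y :=
    ((hψ.differentiableOn two_ne_zero).differentiableAt (hN.mem_nhds hy)).hasDerivAt
  have hd' (y : ℝ) (hy : y ∈ N) : HasDerivAt (deriv ψ) (deriv (deriv ψ) y) y :=
    (((hψ.deriv_of_isOpen hN (by norm_num)).differentiableOn one_ne_zero).differentiableAt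
      (hN.mem_nhds hy)).hasDerivAt
  have hconv := convexOn_add_sq_of_deriv2_ge Metric.isOpen_ball (convex_ball x δ)
    (fun y hy => hd y (hball hy)) (fun y hy => hd' y (hball hy)) (fun y hy => hψ'' y (hball hy)) x
  have hdx : HasDerivAt (fun y => ψ y + C / 2 * (y - x) ^ 2) (deriv ψ x) x :=
    ((hd x hx).add ((((hasDerivAt_id x).sub_const x).pow 2).const_mul (C / 2))).congr_deriv
      (by simp)
  filter_upwards [Metric.ball_mem_nhds x hδ] with y hy
  have := hconv.add_mul_sub_le_of_hasDerivAt (Metric.mem_ball_self hδ) hy hdx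
  simp only [sub_self] at this
  linarith

lemma nonpos_of_mem_Icc_of_eventually_add_sq_le {g : ℝ → ℝ} {a b k : ℝ} (hk : 0 < k)
    (hg : ContinuousOn g (Icc a b)) (ha : g a ≤ 0) (hb : g b ≤ 0)
    (hmin : ∀ z ∈ Ioo a b, ∃ m, ∀ᶠ y in 𝓝 z, g z + m * (y - z) + k * (y - z) ^ 2 ≤ g y) :
    ∀ y ∈ Icc a b, g y ≤ 0 := by
  intro y hy
  obtain ⟨z, hz, hmax⟩ := isCompact_Icc.exists_isMaxOn ⟨y, hy⟩ hg
  refine (hmax hy).trans (not_lt.1 fun hpos => ?_)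
  have hzIoo : z ∈ Ioo a b :=
    ⟨hz.1.lt_of_ne (by rintro rfl; linarith), hz.2.lt_of_ne (by rintro rfl; linarith)⟩
  obtain ⟨m, hm⟩ := hmin z hzIoo
  obtain ⟨δ, hδ, hball⟩ := Metric.eventually_nhds_iff.1
    (hm.and (hmax.isLocalMax (Icc_mem_nhds hzIoo.1 hzIoo.2)))
  have hright := hball (y := z + δ / 2) (by rw [Real.dist_eq, abs_lt]; constructor <;> linarith)
  have hleft := hball (y := z - δ / 2) (by rw [Real.dist_eq, abs_lt]; constructor <;> linarith)
  have hsum : 2 * (k * (δ / 2) ^ 2) ≤ 0 := by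
    linear_combination hright.1 + hright.2 + hleft.1 + hleft.2
  have : 0 < k * (δ / 2) ^ 2 := by positivity
  linarith

lemma mul_le_of_eventually_affine_le {s : Set ℝ} {w : ℝ → ℝ} (hs : Convex ℝ s)
    (hw : ContinuousOn w s) (hmin : ∀ x ∈ s, ∃ m, ∀ᶠ y in 𝓝[s] x, w x + m * (y - x) ≤ w y)
    {a b c : ℝ} (ha : a ∈ s) (hb : b ∈ s) (hc : c ∈ Icc a b) :
    (b - a) * w c ≤ (b - c) * w a + (c - a) * w b := by
  have hab : Icc a b ⊆ s := hs.ordConnected.out ha hb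
  -- The perturbation `ε (y - a) (y - b)` makes the local minorants strictly convex;
  -- then let `ε → 0`.
  have hε : ∀ ε > 0, (b - a) * w c - (b - c) * w a - (c - a) * w b ≤ ε * ((c - a) * (b - c)) := by
    intro ε hε
    have := nonpos_of_mem_Icc_of_eventually_add_sq_le hε
      (g := fun y => (b - a) * w y - (b - y) * w a - (y - a) * w b + ε * ((y - a) * (y - b)))
      (by have := hw.mono hab; fun_prop) (by simp) (by simp) ?_ c hc
    · linarith
    intro z hz
    obtain ⟨m, hm⟩ := hmin z (hab (Ioo_subset_Icc_self hz))
    rw [nhdsWithin_eq_nhds.2 (mem_of_superset (Ioo_mem_nhds hz.1 hz.2)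
      (Ioo_subset_Icc_self.trans hab))] at hm
    refine ⟨(b - a) * m + w a - w b + ε * (2 * z - a - b), hm.mono fun y hy => ?_⟩
    have hba : 0 ≤ b - a := by linarith [hz.1, hz.2]
    linear_combination (b - a) * hy
  have hlim : Tendsto (fun ε : ℝ => ε * ((c - a) * (b - c))) (𝓝[>] 0) (𝓝 0) :=
    ((continuous_mul_const _).tendsto' 0 0 (zero_mul _)).mono_left nhdsWithin_le_nhds
  linarith [ge_of_tendsto hlim (eventually_nhdsWithin_of_forall hε)]

theorem convexOn_of_eventually_affine_le {s : Set ℝ} {w : ℝ → ℝ} (hs : Convex ℝ s)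
    (hw : ContinuousOn w s) (hmin : ∀ x ∈ s, ∃ m, ∀ᶠ y in 𝓝[s] x, w x + m * (y - x) ≤ w y) :
    ConvexOn ℝ s w := by
  refine LinearOrder.convexOn_of_lt hs fun x hx z hz hxz α β hα hβ hαβ => ?_
  have hy : α • x + β • z ∈ Icc x z := by
    obtain rfl : α = 1 - β := by linarith
    simp only [smul_eq_mul]
    constructor <;> nlinarith [mul_pos hα (sub_pos.2 hxz), mul_pos hβ (sub_pos.2 hxz)]
  have := mul_le_of_eventually_affine_le hs hw hmin hx hz hy
  simp only [smul_eq_mul] at this ⊢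
  refine le_of_mul_le_mul_left ?_ (sub_pos.2 hxz)
  linear_combination this + (x * w z - z * w x) * hαβ

lemma ConvexOn.affine_le_of_eventually {s : Set ℝ} {w : ℝ → ℝ} {x m : ℝ}
    (hw : ConvexOn ℝ s w) (hx : x ∈ s) (h : ∀ᶠ y in 𝓝[s] x, w x + m * (y - x) ≤ w y) :
    ∀ y ∈ s, w x + m * (y - x) ≤ w y := by
  have hconv : ConvexOn ℝ s (w - fun y => m * y) := hw.sub ((LinearMap.mul ℝ ℝ m).concaveOn hw.1)
  have hmin : IsMinOn (w - fun y => m * y) s x :=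
    .of_isLocalMinOn_of_convexOn hx (h.mono fun y hy => by simp only [Pi.sub_apply]; linarith) hconv
  intro y hy
  have := isMinOn_iff.1 hmin y hy
  simp only [Pi.sub_apply] at this
  linarith

lemma eventually_le_of_lower_support {Ω N : Set ℝ} {v ψ : ℝ → ℝ} {x C : ℝ} (hN : IsOpen N)
    (hx : x ∈ N) (hψ : ContDiffOn ℝ 2 ψ N) (hψx : ψ x = v x) (hψv : ∀ y ∈ N ∩ Ω, ψ y ≤ v y)
    (hψ'' : ∀ y ∈ N, -C ≤ deriv (deriv ψ) y) :
    ∀ᶠ y in 𝓝[Ω] x, v x + deriv ψ x * (y - x) - C / 2 * (y - x) ^ 2 ≤ v y := by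
  filter_upwards [nhdsWithin_le_nhds (eventually_sub_sq_le_of_deriv2_ge hN hx hψ hψ''),
    inter_mem_nhdsWithin Ω (hN.mem_nhds hx)] with y hy ⟨hyΩ, hyN⟩
  linarith [hψv y ⟨hyN, hyΩ⟩]

lemma Filter.Eventually.affine_le_add_sq {l : Filter ℝ} {v : ℝ → ℝ} {x m C : ℝ} (x₀ : ℝ)
    (h : ∀ᶠ y in l, v x + m * (y - x) - C / 2 * (y - x) ^ 2 ≤ v y) :
    ∀ᶠ y in l, v x + C / 2 * (x - x₀) ^ 2 + (m + C * (x - x₀)) * (y - x) ≤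
      v y + C / 2 * (y - x₀) ^ 2 :=
  h.mono fun y hy => by linear_combination hy

theorem one_dimensional_global_support_bound_general
    (Ω : Set ℝ) (hΩinterval : Convex ℝ Ω)
    (v : ℝ → ℝ) (hv : ContinuousOn v Ω) (C : ℝ)
    (hsupp : ∀ x ∈ Ω, ∃ (ψ : ℝ → ℝ) (N : Set ℝ),
      IsOpen N ∧ x ∈ N ∧ ContDiffOn ℝ 2 ψ N ∧ ψ x = v x ∧
      (∀ y ∈ N ∩ Ω, ψ y ≤ v y) ∧ (∀ y ∈ N, -C ≤ deriv (deriv ψ) y))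
    (x₀ : ℝ) (hx₀ : x₀ ∈ Ω)
    (φ : ℝ → ℝ) (N : Set ℝ) (hNopen : IsOpen N) (hx₀N : x₀ ∈ N)
    (hφC2 : ContDiffOn ℝ 2 φ N) (hφx₀ : φ x₀ = v x₀)
    (hφle : ∀ y ∈ N ∩ Ω, φ y ≤ v y)
    (hφ'' : ∀ y ∈ N, -C ≤ deriv (deriv φ) y) :
    ∀ x ∈ Ω, v x₀ + deriv φ x₀ * (x - x₀) - C / 2 * (x - x₀) ^ 2 ≤ v x := by
  have hconv : ConvexOn ℝ Ω fun y => v y + C / 2 * (y - x₀) ^ 2 := by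
    refine convexOn_of_eventually_affine_le hΩinterval (hv.add (by fun_prop)) fun x hx => ?_
    obtain ⟨ψ, N, hN, hxN, hψ, hψx, hψv, hψ''⟩ := hsupp x hx
    exact ⟨_, (eventually_le_of_lower_support hN hxN hψ hψx hψv hψ'').affine_le_add_sq x₀⟩
  have hglobal := hconv.affine_le_of_eventually hx₀
    ((eventually_le_of_lower_support hNopen hx₀N hφC2 hφx₀ hφle hφ'').affine_le_add_sq x₀)
  intro x hx
  linear_combination hglobal x hx

/-- One-dimensional global support bound (claim in the proof of Lemma 2.16). -/
theorem one_dimensional_global_support_bound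
    (Ω : Set ℝ) (hΩopen : IsOpen Ω) (hΩinterval : Convex ℝ Ω)
    (v : ℝ → ℝ) (hv : ContinuousOn v Ω) (C : ℝ)
    (hsupp : ∀ x ∈ Ω, ∃ (ψ : ℝ → ℝ) (N : Set ℝ),
      IsOpen N ∧ x ∈ N ∧ ContDiffOn ℝ 2 ψ N ∧ ψ x = v x ∧
      (∀ y ∈ N ∩ Ω, ψ y ≤ v y) ∧ (∀ y ∈ N, -C ≤ deriv (deriv ψ) y))
    (x₀ : ℝ) (hx₀ : x₀ ∈ Ω)
    (φ : ℝ → ℝ) (N : Set ℝ) (hNopen : IsOpen N) (hx₀N : x₀ ∈ N)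
    (hφC2 : ContDiffOn ℝ 2 φ N) (hφx₀ : φ x₀ = v x₀)
    (hφle : ∀ y ∈ N ∩ Ω, φ y ≤ v y)
    (hφ'' : ∀ y ∈ N, -C ≤ deriv (deriv φ) y) :
    ∀ x ∈ Ω, v x₀ + deriv φ x₀ * (x - x₀) - C / 2 * (x - x₀) ^ 2 ≤ v x :=
  one_dimensional_global_support_bound_general Ω hΩinterval v hv C hsupp x₀ hx₀ φ N hNopen hx₀N hφC2
    hφx₀ hφle hφ''
end

section
/- Norm identity and nonnegativity for the modified curvature tensor of a Lorentzian product (core computation in Lemma 4.13). Fix n ≥ 2 and let η be the diagonal n×n matrix with η_{AA} = 1 for A < n and η_{nn} = −1 (indices run over {1,…,n}, with n the distinguished 'time' index); note η⁻¹ = η. Let R = (R_{ABCD}) be a family of real numbers indexed by quadruples of indices satisfying the curvature symmetries R_{ABCD} = −R_{BACD} = −R_{ABDC} and R_{ABCD} = R_{CDAB}, and suppose R_{ABCn} = 0 for all A, B, C. Define Ric_{AB} := Σ_C η_{CC} R_{CACB}, and for real constants a, b define V_{ABCD} := R_{ABCD} + a(η_{AC}Ric_{BD} + η_{BD}Ric_{AC}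 − η_{BC}Ric_{AD} − η_{AD}Ric_{BC}) + b(η_{AC}η_{BD} − η_{AD}η_{BC}). Then the Lorentzian squared norm ‖V‖² := Σ_{A,B,C,D,A',B',C',D'} η_{AA'}η_{BB'}η_{CC'}η_{DD'} V_{ABCD}V_{A'B'C'D'} satisfies ‖V‖² = Σ_{i,j,k,l < n} (V_{ijkl})² + 4 Σ_{i,j < n} (a·Ric_{ij} + b·δ_{ij})², and in particular ‖V‖² ≥ 0. -/
open scoped BigOperators

noncomputable section

/-- The Minkowski diagonal `η` on indices `{0,…,n}` with the last index the `time' index: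
`η_A = 1` for spatial indices and `η_n = -1` for the time index. -/
def eta (n : ℕ) (A : Fin (n + 1)) : ℝ := if A = Fin.last n then -1 else 1

/-- The diagonal metric matrix `η_{AB}` (equal to its own inverse). -/
def etaM (n : ℕ) (A B : Fin (n + 1)) : ℝ := if A = B then eta n A else 0

/-- The Ricci tensor `Ric_{AB} = Σ_C η_{CC} R_{CACB}` of the curvature family `R`. -/
def ricOf (n : ℕ) (R : Fin (n + 1) → Fin (n + 1) → Fin (n + 1) → Fin (n + 1) → ℝ)
    (A B : Fin (n + 1)) : ℝ :=
  ∑ C, eta n C * R C A C B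

/-- The modified curvature tensor `V_{ABCD}`. -/
def vMod (n : ℕ) (R : Fin (n + 1) → Fin (n + 1) → Fin (n + 1) → Fin (n + 1) → ℝ)
    (a b : ℝ) (A B C D : Fin (n + 1)) : ℝ :=
  R A B C D +
    a * (etaM n A C * ricOf n R B D + etaM n B D * ricOf n R A C -
      etaM n B C * ricOf n R A D - etaM n A D * ricOf n R B C) +
    b * (etaM n A C * etaM n B D - etaM n A D * etaM n B C)

/-- The Lorentzian squared norm of a `(0,4)` tensor with respect to `η`. -/
def lorNormSq (n : ℕ)
    (V : Fin (n + 1) → Fin (n + 1) → Fin (n + 1) → Fin (n + 1) → ℝ) : ℝ :=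
  ∑ A, ∑ A', ∑ B, ∑ B', ∑ C, ∑ C', ∑ D, ∑ D',
    etaM n A A' * etaM n B B' * etaM n C C' * etaM n D D' * V A B C D * V A' B' C' D'

section helpers
variable {n : ℕ}

lemma eta_castSucc (i : Fin n) : eta n i.castSucc = 1 := by
  simp [eta, Fin.ne_of_lt (Fin.castSucc_lt_last i)]

lemma eta_last : eta n (Fin.last n) = -1 := by simp [eta]

lemma etaM_cs_last (i : Fin n) : etaM n i.castSucc (Fin.last n) = 0 := by
  simp [etaM, Fin.ne_of_lt (Fin.castSucc_lt_last i)]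

lemma etaM_last_cs (i : Fin n) : etaM n (Fin.last n) i.castSucc = 0 := by
  simp [etaM, (Fin.ne_of_lt (Fin.castSucc_lt_last i)).symm]

lemma etaM_last_last : etaM n (Fin.last n) (Fin.last n) = -1 := by simp [etaM, eta_last]

lemma etaM_cs_cs (i j : Fin n) :
    etaM n i.castSucc j.castSucc = if i = j then 1 else 0 := by
  simp [etaM, Fin.castSucc_inj, eta_castSucc]

variable (R : Fin (n + 1) → Fin (n + 1) → Fin (n + 1) → Fin (n + 1) → ℝ)
  (hsymm₁ : ∀ A B C D, R A B C D = -R B A C D)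
  (hsymm₂ : ∀ A B C D, R A B C D = -R A B D C)
  (hsymm₃ : ∀ A B C D, R A B C D = R C D A B)
  (hRn : ∀ A B C, R A B C (Fin.last n) = 0)

include hsymm₂ hRn in
lemma R_last3 (A B D) : R A B (Fin.last n) D = 0 := by
  rw [hsymm₂, hRn, neg_zero]

include hsymm₂ hsymm₃ hRn in
lemma R_last1 (B C D) : R (Fin.last n) B C D = 0 := by
  rw [hsymm₃]; exact R_last3 R hsymm₂ hRn _ _ _

include hsymm₁ hsymm₂ hsymm₃ hRn in
lemma R_last2 (A C D) : R A (Fin.last n) C D = 0 := by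
  rw [hsymm₁, R_last1 R hsymm₂ hsymm₃ hRn, neg_zero]

include hsymm₁ hsymm₂ hsymm₃ hRn in
lemma ric_last_left (B) : ricOf n R (Fin.last n) B = 0 := by
  simp [ricOf, R_last2 R hsymm₁ hsymm₂ hsymm₃ hRn]

include hRn in
lemma ric_last_right (A) : ricOf n R A (Fin.last n) = 0 := by
  simp [ricOf, hRn]

variable (a b : ℝ)

include hsymm₁ hsymm₂ hsymm₃ hRn in
lemma v_last1 (j k l : Fin n) :
    vMod n R a b (Fin.last n) j.castSucc k.castSucc l.castSucc = 0 := by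
  simp only [vMod, R_last1 R hsymm₂ hsymm₃ hRn, etaM_last_cs, etaM_cs_last,
    ric_last_left R hsymm₁ hsymm₂ hsymm₃ hRn, ric_last_right R hRn]
  ring

include hsymm₁ hsymm₂ hsymm₃ hRn in
lemma v_last2 (i k l : Fin n) :
    vMod n R a b i.castSucc (Fin.last n) k.castSucc l.castSucc = 0 := by
  simp [vMod, R_last2 R hsymm₁ hsymm₂ hsymm₃ hRn, etaM_last_cs, etaM_cs_last,
    ric_last_left R hsymm₁ hsymm₂ hsymm₃ hRn, ric_last_right R hRn]

include hsymm₁ hsymm₂ hsymm₃ hRn in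
lemma v_last3 (i j l : Fin n) :
    vMod n R a b i.castSucc j.castSucc (Fin.last n) l.castSucc = 0 := by
  simp [vMod, R_last3 R hsymm₂ hRn, etaM_last_cs, etaM_cs_last,
    ric_last_left R hsymm₁ hsymm₂ hsymm₃ hRn, ric_last_right R hRn]

include hsymm₁ hsymm₂ hsymm₃ hRn in
lemma v_last4 (i j k : Fin n) :
    vMod n R a b i.castSucc j.castSucc k.castSucc (Fin.last n) = 0 := by
  simp [vMod, hRn, etaM_last_cs, etaM_cs_last,
    ric_last_left R hsymm₁ hsymm₂ hsymm₃ hRn, ric_last_right R hRn]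

include hsymm₁ in
lemma v_diag1 (C D) : vMod n R a b (Fin.last n) (Fin.last n) C D = 0 := by
  have h : R (Fin.last n) (Fin.last n) C D = 0 := by
    have := hsymm₁ (Fin.last n) (Fin.last n) C D; linarith
  simp only [vMod, h]; ring

include hsymm₂ in
lemma v_diag2 (A B) : vMod n R a b A B (Fin.last n) (Fin.last n) = 0 := by
  have h : R A B (Fin.last n) (Fin.last n) = 0 := by
    have := hsymm₂ A B (Fin.last n) (Fin.last n); linarith
  simp only [vMod, h]; ring

include hsymm₁ hsymm₂ hsymm₃ hRn in
lemma v_tsts (j l : Fin n) :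
    vMod n R a b (Fin.last n) j.castSucc (Fin.last n) l.castSucc =
      -(a * ricOf n R j.castSucc l.castSucc + b * (if j = l then (1:ℝ) else 0)) := by
  simp only [vMod, R_last1 R hsymm₂ hsymm₃ hRn, etaM_last_cs, etaM_cs_last, etaM_last_last,
    etaM_cs_cs, ric_last_left R hsymm₁ hsymm₂ hsymm₃ hRn, ric_last_right R hRn]
  by_cases h : j = l <;> simp [h] <;> ring

include hsymm₁ hsymm₂ hsymm₃ hRn in
lemma v_tsst (j l : Fin n) :
    vMod n R a b (Fin.last n) j.castSucc l.castSucc (Fin.last n) =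
      a * ricOf n R j.castSucc l.castSucc + b * (if j = l then (1:ℝ) else 0) := by
  simp only [vMod, hRn, etaM_last_cs, etaM_cs_last, etaM_last_last,
    etaM_cs_cs, ric_last_left R hsymm₁ hsymm₂ hsymm₃ hRn, ric_last_right R hRn]
  by_cases h : j = l <;> simp [h] <;> ring

include hsymm₁ hsymm₂ hsymm₃ hRn in
lemma v_stts (j l : Fin n) :
    vMod n R a b j.castSucc (Fin.last n) (Fin.last n) l.castSucc =
      a * ricOf n R j.castSucc l.castSucc + b * (if j = l then (1:ℝ) else 0) := by
  simp only [vMod, R_last3 R hsymm₂ hRn, etaM_last_cs, etaM_cs_last, etaM_last_last,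
    etaM_cs_cs, ric_last_left R hsymm₁ hsymm₂ hsymm₃ hRn, ric_last_right R hRn]
  by_cases h : j = l <;> simp [h] <;> ring

include hsymm₁ hsymm₂ hsymm₃ hRn in
lemma v_stst (j l : Fin n) :
    vMod n R a b j.castSucc (Fin.last n) l.castSucc (Fin.last n) =
      -(a * ricOf n R j.castSucc l.castSucc + b * (if j = l then (1:ℝ) else 0)) := by
  simp only [vMod, hRn, etaM_last_cs, etaM_cs_last, etaM_last_last,
    etaM_cs_cs, ric_last_left R hsymm₁ hsymm₂ hsymm₃ hRn, ric_last_right R hRn]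
  by_cases h : j = l <;> simp [h] <;> ring

end helpers

lemma lorNormSq_eq (n : ℕ) (V : Fin (n+1) → Fin (n+1) → Fin (n+1) → Fin (n+1) → ℝ) :
    lorNormSq n V = ∑ A, ∑ B, ∑ C, ∑ D,
      eta n A * eta n B * eta n C * eta n D * (V A B C D)^2 := by
  simp only [lorNormSq, etaM, ite_mul, zero_mul, mul_ite, mul_zero,
    Finset.sum_ite_irrel, Finset.sum_ite_eq, Finset.mem_univ, if_true,
    Finset.sum_const_zero]
  exact Finset.sum_congr rfl fun A _ => Finset.sum_congr rfl fun B _ =>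
    Finset.sum_congr rfl fun C _ => Finset.sum_congr rfl fun D _ => by ring

/-- Norm identity and nonnegativity for the modified curvature tensor of a Lorentzian
product (core computation in Lemma 4.13).  Here the indices run over `Fin (n+1)` with
`n ≥ 1` (so the total dimension `n+1` is at least `2`); the spatial indices are the
`Fin.castSucc` images of `Fin n` and the time index is `Fin.last n`. -/
theorem lorentzian_product_norm_identity
    (n : ℕ) (hn : 1 ≤ n)
    (R : Fin (n + 1) → Fin (n + 1) → Fin (n + 1) → Fin (n + 1) → ℝ)
    (hsymm₁ : ∀ A B C D, R A B C D = -R B A C D)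
    (hsymm₂ : ∀ A B C D, R A B C D = -R A B D C)
    (hsymm₃ : ∀ A B C D, R A B C D = R C D A B)
    (hRn : ∀ A B C, R A B C (Fin.last n) = 0)
    (a b : ℝ) :
    lorNormSq n (vMod n R a b) =
      (∑ i : Fin n, ∑ j : Fin n, ∑ k : Fin n, ∑ l : Fin n,
        (vMod n R a b i.castSucc j.castSucc k.castSucc l.castSucc) ^ 2) +
      4 * (∑ i : Fin n, ∑ j : Fin n,
        (a * ricOf n R i.castSucc j.castSucc + b * (if i = j then (1 : ℝ) else 0)) ^ 2) ∧
    0 ≤ lorNormSq n (vMod n R a b) := by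
  have key : lorNormSq n (vMod n R a b) =
      (∑ i : Fin n, ∑ j : Fin n, ∑ k : Fin n, ∑ l : Fin n,
        (vMod n R a b i.castSucc j.castSucc k.castSucc l.castSucc) ^ 2) +
      4 * (∑ i : Fin n, ∑ j : Fin n,
        (a * ricOf n R i.castSucc j.castSucc + b * (if i = j then (1 : ℝ) else 0)) ^ 2) := by
    rw [lorNormSq_eq]
    simp only [Fin.sum_univ_castSucc, eta_castSucc, eta_last,
      v_last1 R hsymm₁ hsymm₂ hsymm₃ hRn, v_last2 R hsymm₁ hsymm₂ hsymm₃ hRn,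
      v_last3 R hsymm₁ hsymm₂ hsymm₃ hRn, v_last4 R hsymm₁ hsymm₂ hsymm₃ hRn,
      v_diag1 R hsymm₁, v_diag2 R hsymm₂,
      v_tsts R hsymm₁ hsymm₂ hsymm₃ hRn, v_tsst R hsymm₁ hsymm₂ hsymm₃ hRn,
      v_stts R hsymm₁ hsymm₂ hsymm₃ hRn, v_stst R hsymm₁ hsymm₂ hsymm₃ hRn,
      one_mul, mul_one, neg_mul, neg_neg, mul_neg, neg_sq,
      ne_eq, OfNat.ofNat_ne_zero, not_false_iff, zero_pow, mul_zero,
      Finset.sum_const_zero, add_zero, zero_add, neg_zero, Finset.sum_add_distrib]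
    ring
  refine ⟨key, key ▸ ?_⟩
  positivity


end
end
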